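/- For m = 3, the 3-percolation number of the grid P₃ □ P₃ equals 5, and the unique minimum 3-percolating set avoiding three consecutive boundary vertices consists of the four corner vertices together with the center vertex. -/

import Mathlib

open SimpleGraph

/-- The set of vertices eventually infected in `r`-neighbor bootstrap percolation
on the graph `G`, starting from the initially infected set `A`. -/
inductive Infected {V : Type*} (G : SimpleGraph V) (r : ℕ) (A : Set V) : V → Prop
  | init {v : V} : v ∈ A → Infected G r A v
  | step {v : V} (T : Finset V) : r ≤ T.card → (∀ u ∈ T, G.Adj u v) →
      (∀ u ∈ T, Infected G r A u) → Infected G r A v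

/-- `A` is an `r`-percolating set of `G`. -/
def Percolates {V : Type*} (G : SimpleGraph V) (r : ℕ) (A : Set V) : Prop :=
  ∀ v, Infected G r A v

/-- The `r`-percolation number of `G`: minimum size of an `r`-percolating set. -/
noncomputable def percNum (V : Type*) [Fintype V] (G : SimpleGraph V) (r : ℕ) : ℕ :=
  sInf {k | ∃ A : Finset V, A.card = k ∧ Percolates G r (↑A)}

/-- The `n × m` grid graph `Pₙ □ Pₘ`. -/
def gridGraph (n m : ℕ) : SimpleGraph (Fin n × Fin m) :=
  (pathGraph n) □ (pathGraph m)

/-- A boundary vertex of a grid: degree at most 3. -/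
def IsBoundary {V : Type*} (G : SimpleGraph V) (v : V) : Prop :=
  (G.neighborSet v).ncard ≤ 3
/-! Corners have degree 2, so every 3-percolating set contains all four of them. The corners
alone infect nothing, since every other vertex sees at most two of them; adding the center,
every side midpoint sees three infected neighbours. Hence `m = 5`, and a percolating 5-set is
the corners plus one vertex `x`. If `x` is a side midpoint, `x` and its two corner neighbours
are three consecutive boundary vertices, so avoiding those forces `x` to be the center. -/

open Finset

section Bootstrap

variable {V : Type*} {G : SimpleGraph V} {r : ℕ}

theorem Infected.mem_of_degree_lt {A : Set V} {v : V} [Fintype (G.neighborSet v)]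
    (h : Infected G r A v) (hdeg : G.degree v < r) : v ∈ A := by
  cases h with
  | init hv => exact hv
  | step T hcard hadj _ =>
    have hT : T ⊆ G.neighborFinset v := fun u hu => by
      simpa using (hadj u hu).symm
    exact absurd (hcard.trans (card_le_card hT)) (by simpa using hdeg)

variable [DecidableEq V] [G.LocallyFinite]

theorem Infected.mem_of_closed {A : Set V} {B : Finset V} (hAB : A ⊆ B)
    (hB : ∀ v ∉ B, #(G.neighborFinset v ∩ B) < r) {v : V} (h : Infected G r A v) :
    v ∈ B := by
  induction h with
  | init hv => exact hAB hv
  | @step v T hcard hadj _ ih =>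
    by_contra hv
    have hT : T ⊆ G.neighborFinset v ∩ B := fun u hu =>
      mem_inter.2 ⟨by simpa using (hadj u hu).symm, ih u hu⟩
    exact absurd (hcard.trans (card_le_card hT)) (not_le.2 (hB v hv))

theorem percolates_of_forall_le_card_neighborFinset_inter {A : Finset V}
    (hA : ∀ v ∉ A, r ≤ #(G.neighborFinset v ∩ A)) : Percolates G r ↑A := by
  intro v
  by_cases hv : v ∈ A
  · exact .init hv
  · refine .step _ (hA v hv) (fun u hu => ?_) (fun u hu => .init (mem_inter.1 hu).2)
    exact (G.mem_neighborFinset v u).1 (mem_inter.1 hu).1 |>.symm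

end Bootstrap

theorem percNum_eq {V : Type*} [Fintype V] {G : SimpleGraph V} {r : ℕ} (A : Finset V)
    (hA : Percolates G r ↑A) (hmin : ∀ B : Finset V, Percolates G r ↑B → #A ≤ #B) :
    percNum V G r = #A :=
  le_antisymm (Nat.sInf_le ⟨A, rfl, hA⟩)
    (le_csInf ⟨_, A, rfl, hA⟩ fun _ ⟨B, hB, hperc⟩ => hB ▸ hmin B hperc)

instance (n m : ℕ) : DecidableRel (gridGraph n m).Adj := fun u v =>
  decidable_of_iff
    (((u.1.val + 1 = v.1.val ∨ v.1.val + 1 = u.1.val) ∧ u.2 = v.2) ∨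
      ((u.2.val + 1 = v.2.val ∨ v.2.val + 1 = u.2.val) ∧ u.1 = v.1))
    (by simp only [gridGraph, boxProd_adj, pathGraph_adj])

namespace Grid3

abbrev V := Fin 3 × Fin 3

def center : V := (1, 1)

def corners : Finset V := {(0, 0), (0, 2), (2, 0), (2, 2)}

theorem isBoundary_iff_ne_center (v : V) : IsBoundary (gridGraph 3 3) v ↔ v ≠ center := by
  rw [IsBoundary, ← coe_neighborFinset, Set.ncard_coe_finset, card_neighborFinset_eq_degree]
  revert v
  decide

theorem corners_subset_of_percolates {A : Set V} (hA : Percolates (gridGraph 3 3) 3 A) :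
    ↑corners ⊆ A :=
  fun v hv => (hA v).mem_of_degree_lt (by revert v; decide)

theorem not_percolates_corners : ¬ Percolates (gridGraph 3 3) 3 ↑corners := fun h =>
  absurd ((h center).mem_of_closed subset_rfl (by decide)) (by decide)

theorem percolates_insert_center_corners :
    Percolates (gridGraph 3 3) 3 ↑(insert center corners) :=
  percolates_of_forall_le_card_neighborFinset_inter (by decide)

theorem five_le_card_of_percolates {A : Finset V} (hA : Percolates (gridGraph 3 3) 3 ↑A) :
    5 ≤ #A := by
  have hsub : corners ⊆ A := by exact_mod_cast corners_subset_of_percolates hA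
  by_contra! hlt
  have hA_eq : corners = A := eq_of_subset_of_card_le hsub (by rw [show #corners = 4 by rfl]; omega)
  exact not_percolates_corners (hA_eq ▸ hA)

theorem exists_adj_corners_of_ne_center (x : V) (hx : x ∉ corners) (hc : x ≠ center) :
    ∃ u ∈ corners, ∃ z ∈ corners,
      (gridGraph 3 3).Adj u x ∧ (gridGraph 3 3).Adj x z ∧ u ≠ z := by
  revert x; decide

theorem exists_eq_insert_corners_of_percolates {S : Finset V} (hcard : #S = 5)
    (hS : Percolates (gridGraph 3 3) 3 ↑S) :
    ∃ x ∉ corners, S = insert x corners := by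
  have hsub : corners ⊆ S := by exact_mod_cast corners_subset_of_percolates hS
  have hne : corners ≠ S := by rintro rfl; exact absurd hcard (by decide)
  obtain ⟨x, hxS, hx⟩ := exists_of_ssubset (ssubset_of_subset_of_ne hsub hne)
  refine ⟨x, hx, (eq_of_subset_of_card_le (insert_subset hxS hsub) ?_).symm⟩
  rw [card_insert_of_notMem hx, hcard]
  rfl

end Grid3

open Grid3 in
theorem stmt_19 :
    percNum (Fin 3 × Fin 3) (gridGraph 3 3) 3 = 5 ∧
    ∀ S : Finset (Fin 3 × Fin 3),
      S.card = 5 → Percolates (gridGraph 3 3) 3 (↑S) →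
      (¬ ∃ u v z, u ∈ S ∧ v ∈ S ∧ z ∈ S ∧
      (gridGraph 3 3).Adj u v ∧ (gridGraph 3 3).Adj v z ∧ u ≠ z ∧
      IsBoundary (gridGraph 3 3) u ∧ IsBoundary (gridGraph 3 3) v ∧
      IsBoundary (gridGraph 3 3) z) →
      S = {(0, 0), (0, 2), (2, 0), (2, 2), (1, 1)} := by
  refine ⟨percNum_eq _ percolates_insert_center_corners fun _ => five_le_card_of_percolates, ?_⟩
  intro S hcard hS hno
  obtain ⟨x, hx, rfl⟩ := exists_eq_insert_corners_of_percolates hcard hS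
  by_cases hc : x = Grid3.center
  · subst hc; decide
  obtain ⟨u, hu, z, hz, hux, hxz, huz⟩ := exists_adj_corners_of_ne_center x hx hc
  have hbd : ∀ w ∈ corners, IsBoundary (gridGraph 3 3) w := fun w hw =>
    (isBoundary_iff_ne_center w).2 (by rintro rfl; exact absurd hw (by decide))
  exact absurd ⟨u, x, z, mem_insert_of_mem hu, mem_insert_self x _, mem_insert_of_mem hz,
    hux, hxz, huz, hbd u hu, (isBoundary_iff_ne_center x).2 hc, hbd z hz⟩ hno
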